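/- A (T+1)-layered linear deterministic network N over 𝔽_p is linearly solvable if and only if its reciprocal network N′ is linearly solvable. Equivalently, a rate tuple (w_1 log p, …, w_n log p) is achievable by linear coding on N if and only if it is achievable by linear coding on N′. -/

import Mathlib

open Matrix

/-!
A `(T+1)`-layered linear deterministic network over `𝔽_p = ZMod p`.
Layer `m` (for `0 ≤ m ≤ T`) has a finite set of vertices `V m`; the field `V` is
indexed by all of `ℕ` for convenience, but only layers `0,…,T` play a role.
`G m i j` is the channel gain matrix on the edge from node `i` in layer `m`
to node `j` in layer `m+1` (it is the zero matrix when there is no edge);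
only `m < T` is relevant.  There are `n` unicast messages; message `k` has
length `w k`, source node `src k` in layer `0` and destination node `dst k`
in layer `T`.
-/
structure LayeredNetwork (p q T n : ℕ) where
  V : ℕ → Type
  fintypeV : ∀ m, Fintype (V m)
  decEqV : ∀ m, DecidableEq (V m)
  G : (m : ℕ) → V m → V (m + 1) → Matrix (Fin q) (Fin q) (ZMod p)
  w : Fin n → ℕ
  src : Fin n → V 0
  dst : Fin n → V T

attribute [instance] LayeredNetwork.fintypeV LayeredNetwork.decEqV

/-- A linear coding scheme: encoding matrices `C k` at the sources, relay
matrices `F m j` at the intermediate nodes (only layers `1,…,T-1` are relevant),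
and decoding matrices `D k` at the destinations. -/
structure Scheme {p q T n : ℕ} (N : LayeredNetwork p q T n) where
  C : (k : Fin n) → Matrix (Fin q) (Fin (N.w k)) (ZMod p)
  F : (m : ℕ) → N.V m → Matrix (Fin q) (Fin q) (ZMod p)
  D : (k : Fin n) → Matrix (Fin (N.w k)) (Fin q) (ZMod p)

variable {p q T n : ℕ} {N : LayeredNetwork p q T n}

/-- A tuple of messages `W k ∈ 𝔽_p^{w k}`. -/
def Msg (N : LayeredNetwork p q T n) : Type :=
  (k : Fin n) → Fin (N.w k) → ZMod p

/-- The signal transmitted by each node: a source node `j` (layer `0`) sends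
`x_j = ∑_{k : src k = j} C_k W_k`; a node `j` in layer `m+1` sends
`x_j = F_j y_j` where `y_j = ∑_i G_{ij} x_i` is its received signal. -/
def xSig (S : Scheme N) (W : Msg N) : (m : ℕ) → N.V m → (Fin q → ZMod p)
  | 0, j => ∑ k : Fin n, if N.src k = j then (S.C k).mulVec (W k) else 0
  | m + 1, j => (S.F (m + 1) j).mulVec (∑ i : N.V m, (N.G m i j).mulVec (xSig S W m i))

/-- The signal received by a node `j` in layer `m ≥ 1`: `y_j = ∑_i G_{ij} x_i`. -/
def ySig (S : Scheme N) (W : Msg N) : (m : ℕ) → N.V m → (Fin q → ZMod p)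
  | 0, _ => 0
  | m + 1, j => ∑ i : N.V m, (N.G m i j).mulVec (xSig S W m i)

/-- The reconstructed message `Ŵ_k = D_k y_{dst k}` at the destination of message `k`. -/
def decode (S : Scheme N) (W : Msg N) (k : Fin n) : Fin (N.w k) → ZMod p :=
  (S.D k).mulVec (ySig S W T (N.dst k))

/-- The scheme linearly solves the network: `Ŵ_k = W_k` for every choice of messages. -/
def Solves (N : LayeredNetwork p q T n) (S : Scheme N) : Prop :=
  ∀ (W : Msg N) (k : Fin n), decode S W k = W k

/-- The network is linearly solvable: some linear coding scheme solves it. -/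
def LinearlySolvable (N : LayeredNetwork p q T n) : Prop :=
  ∃ S : Scheme N, Solves N S

/-- The reciprocal network: the layers in reversed order (layer `m` of the
reciprocal is layer `T - m` of `N`), the channel gain matrix on each reversed
edge is the transpose of the original one, and for every message the roles of
the source and the destination are swapped. -/
def LayeredNetwork.reciprocal (N : LayeredNetwork p q T n) : LayeredNetwork p q T n where
  V := fun m => N.V (T - m)
  fintypeV := fun m => N.fintypeV (T - m)
  decEqV := fun m => N.decEqV (T - m)
  G := fun m j i =>
    if h : m < T then
      (N.G (T - m - 1) i (cast (congrArg N.V (by omega : T - m = T - m - 1 + 1)) j))ᵀ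
    else 0
  w := N.w
  src := N.dst
  dst := fun k => cast (congrArg N.V (by omega : (0 : ℕ) = T - T)) (N.src k)

/-!
Everything is linear, so a scheme is described by its transfer matrices: `S.transfer k l` maps
message `l` to the estimate of message `k`, and `S` solves `N` iff this is the identity for
`k = l` and zero otherwise. Transposing every coding matrix gives a scheme on the reciprocal
network whose transfer matrices are the transposes, `S.reciprocal.transfer k l = (S.transfer l k)ᵀ`.
This is seen by pairing the forward transfer matrices of `S` with the backward ones of
`S.reciprocal`, summed over a layer: the pairing is the same at every layer (channels and relays
move from one side to the other by transposition), and it equals the two transfer matrices at the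
two ends of the network.
-/

theorem LayeredNetwork.reciprocal_G_of_lt {d : ℕ} (hd : d < T) (j : N.reciprocal.V d)
    (i : N.reciprocal.V (d + 1)) :
    N.reciprocal.G d j i = (N.G (T - d - 1) i (cast (congrArg N.V (by omega)) j))ᵀ :=
  dif_pos hd

def Msg.single (l : Fin n) (v : Fin (N.w l) → ZMod p) : Msg N :=
  Pi.single l v

namespace Scheme

variable (S : Scheme N)

def xTransfer (k : Fin n) : (m : ℕ) → N.V m → Matrix (Fin q) (Fin (N.w k)) (ZMod p)
  | 0, j => if N.src k = j then S.C k else 0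
  | m + 1, j => S.F (m + 1) j * ∑ i : N.V m, N.G m i j * xTransfer k m i

def yTransfer (k : Fin n) : (m : ℕ) → N.V m → Matrix (Fin q) (Fin (N.w k)) (ZMod p)
  | 0, _ => 0
  | m + 1, j => ∑ i : N.V m, N.G m i j * S.xTransfer k m i

def transfer (k l : Fin n) : Matrix (Fin (N.w k)) (Fin (N.w l)) (ZMod p) :=
  S.D k * S.yTransfer l T (N.dst k)

theorem xSig_eq_sum (W : Msg N) (m : ℕ) (j : N.V m) :
    xSig S W m j = ∑ k, S.xTransfer k m j *ᵥ W k := by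
  induction m with
  | zero =>
    refine Finset.sum_congr rfl fun k _ => ?_
    simp only [xTransfer]
    split_ifs <;> simp
  | succ m ih =>
    simp only [xSig, xTransfer, ih, mulVec_sum, mulVec_mulVec, Matrix.mul_sum, sum_mulVec]
    exact Finset.sum_comm

theorem ySig_eq_sum (W : Msg N) (m : ℕ) (j : N.V m) :
    ySig S W m j = ∑ k, S.yTransfer k m j *ᵥ W k := by
  cases m with
  | zero => simp [ySig, yTransfer]
  | succ m =>
    simp only [ySig, yTransfer, xSig_eq_sum, mulVec_sum, mulVec_mulVec, sum_mulVec]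
    exact Finset.sum_comm

theorem decode_eq_sum (W : Msg N) (k : Fin n) :
    decode S W k = ∑ l, S.transfer k l *ᵥ W l := by
  simp only [decode, transfer, ySig_eq_sum, mulVec_sum, mulVec_mulVec]

theorem decode_single (l : Fin n) (v : Fin (N.w l) → ZMod p) (k : Fin n) :
    decode S (Msg.single l v) k = S.transfer k l *ᵥ v := by
  rw [decode_eq_sum, Finset.sum_eq_single l (fun l' _ hl' => by simp [Msg.single, hl']) (by simp)]
  simp [Msg.single]

theorem solves_iff_transfer :
    Solves N S ↔ (∀ k, S.transfer k k = 1) ∧ ∀ k l, k ≠ l → S.transfer k l = 0 := by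
  constructor
  · intro h
    refine ⟨fun k => ext_iff_mulVec.2 fun v => ?_, fun k l hkl => ext_iff_mulVec.2 fun v => ?_⟩
    · rw [← decode_single, h]
      simp [Msg.single]
    · rw [← decode_single, h]
      simp [Msg.single, hkl]
  · rintro ⟨hdiag, hoff⟩ W k
    rw [decode_eq_sum, Finset.sum_eq_single k (fun l _ hlk => by rw [hoff k l hlk.symm,
      zero_mulVec]) (by simp), hdiag, one_mulVec]

theorem xTransfer_congr {S₁ S₂ : Scheme N} (hC : S₁.C = S₂.C) (hF : ∀ m < T, S₁.F m = S₂.F m)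
    (k : Fin n) (m : ℕ) (hm : m < T) : S₁.xTransfer k m = S₂.xTransfer k m := by
  induction m with
  | zero => funext j; simp only [xTransfer, hC]
  | succ m ih =>
    funext j
    simp only [xTransfer, hF (m + 1) hm, ih (by omega)]

theorem transfer_congr {S₁ S₂ : Scheme N} (hC : S₁.C = S₂.C) (hD : S₁.D = S₂.D)
    (hF : ∀ m < T, S₁.F m = S₂.F m) : S₁.transfer = S₂.transfer := by
  funext k l
  simp only [transfer, hD]
  congr 1
  obtain _ | t := T
  · rfl
  · simp only [yTransfer, xTransfer_congr hC hF l t (Nat.lt_succ_self t)]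

theorem xTransfer_of_pos (k : Fin n) {m : ℕ} (hm : 0 < m) (j : N.V m) :
    S.xTransfer k m j = S.F m j * S.yTransfer k m j := by
  obtain ⟨m, rfl⟩ := Nat.exists_eq_add_of_lt hm
  rfl

/-- Stated for `0 = m` so that the cast is the one in the definition of `N.reciprocal.dst`. -/
theorem xTransfer_of_eq_zero (k : Fin n) {m : ℕ} (hm : 0 = m) (j : N.V m) :
    S.xTransfer k m j = if cast (congrArg N.V hm) (N.src k) = j then S.C k else 0 := by
  subst hm
  rfl

theorem yTransfer_of_eq_succ (k : Fin n) {m m' : ℕ} (hm : m = m' + 1) (j : N.V m) :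
    S.yTransfer k m j = ∑ i : N.V m', N.G m' i (cast (congrArg N.V hm) j) * S.xTransfer k m' i := by
  subst hm
  rfl

def reciprocal : Scheme N.reciprocal where
  C k := (S.D k)ᵀ
  F m j := (S.F (T - m) j)ᵀ
  D k := (S.C k)ᵀ

/- Layer `d` of `N.reciprocal` is layer `T - d` of `N`, so a term such as
`S.yTransfer k (T - d) j` with `j : N.reciprocal.V d` is type-correct only after unfolding
`LayeredNetwork.reciprocal`; `rw` cannot rewrite inside such terms, hence the explicit
`congrArg` and `Finset.sum_congr` steps below. -/

def rxPairing (k l : Fin n) (d : ℕ) : Matrix (Fin (N.w l)) (Fin (N.w k)) (ZMod p) :=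
  ∑ j : N.reciprocal.V d, (S.reciprocal.xTransfer l d j)ᵀ * S.yTransfer k (T - d) j

def txPairing (k l : Fin n) (d : ℕ) : Matrix (Fin (N.w l)) (Fin (N.w k)) (ZMod p) :=
  ∑ j : N.reciprocal.V d, (S.reciprocal.yTransfer l d j)ᵀ * S.xTransfer k (T - d) j

theorem rxPairing_zero (k l : Fin n) : S.rxPairing k l 0 = S.transfer l k := by
  refine (Finset.sum_eq_single (N.dst l) (fun j _ hj => ?_)
    (fun h => absurd (Finset.mem_univ _) h)).trans ?_
  · have hj : S.reciprocal.xTransfer l 0 j = 0 := if_neg (Ne.symm hj)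
    simp only [hj, transpose_zero, Matrix.zero_mul]
    rfl
  · have hdst : S.reciprocal.xTransfer l 0 (N.dst l) = (S.D l)ᵀ := if_pos rfl
    simp only [hdst]
    rfl

theorem rxPairing_eq_txPairing (k l : Fin n) {d : ℕ} (hd : 0 < d) (hdT : d < T) :
    S.rxPairing k l d = S.txPairing k l d := by
  refine Finset.sum_congr rfl fun j _ => ?_
  rw [xTransfer_of_pos _ _ hd, transpose_mul, Matrix.mul_assoc]
  exact congrArg (_ * ·) (S.xTransfer_of_pos k (Nat.sub_pos_of_lt hdT) j).symm

theorem transpose_reciprocal_yTransfer_succ (l : Fin n) {d : ℕ} (hdT : d < T)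
    (i : N.reciprocal.V (d + 1)) :
    (S.reciprocal.yTransfer l (d + 1) i)ᵀ = ∑ j : N.reciprocal.V d,
      (S.reciprocal.xTransfer l d j)ᵀ * N.G (T - d - 1) i (cast (congrArg N.V (by omega)) j) := by
  simp only [yTransfer, transpose_sum, transpose_mul, N.reciprocal_G_of_lt hdT, transpose_transpose]

theorem txPairing_succ (k l : Fin n) {d : ℕ} (hdT : d < T) :
    S.txPairing k l (d + 1) = S.rxPairing k l d := by
  have hsucc : T - d = T - d - 1 + 1 := by omega
  calc S.txPairing k l (d + 1)
      = (∑ i : N.V (T - d - 1), ∑ j : N.reciprocal.V d, (S.reciprocal.xTransfer l d j)ᵀ *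
          (N.G (T - d - 1) i (cast (congrArg N.V hsucc) j) * S.xTransfer k (T - d - 1) i) :
          Matrix (Fin (N.w l)) (Fin (N.w k)) (ZMod p)) :=
        Finset.sum_congr rfl fun i _ => by
          rw [S.transpose_reciprocal_yTransfer_succ l hdT]
          exact (Matrix.sum_mul _ _ _).trans (Finset.sum_congr rfl fun j _ => Matrix.mul_assoc _ _ _)
    _ = (∑ j : N.reciprocal.V d, (S.reciprocal.xTransfer l d j)ᵀ * ∑ i : N.V (T - d - 1),
          N.G (T - d - 1) i (cast (congrArg N.V hsucc) j) * S.xTransfer k (T - d - 1) i :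
          Matrix (Fin (N.w l)) (Fin (N.w k)) (ZMod p)) :=
        Finset.sum_comm.trans (Finset.sum_congr rfl fun j _ => (Matrix.mul_sum _ _ _).symm)
    _ = S.rxPairing k l d :=
        Finset.sum_congr rfl fun j _ => congrArg (_ * ·) (S.yTransfer_of_eq_succ k hsucc j).symm

theorem txPairing_self (k l : Fin n) : S.txPairing k l T = (S.reciprocal.transfer k l)ᵀ := by
  have hsrc := S.xTransfer_of_eq_zero k (Nat.sub_self T).symm
  refine (Finset.sum_eq_single (N.reciprocal.dst k) (fun j _ hj => ?_)
    (fun h => absurd (Finset.mem_univ _) h)).trans ?_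
  · simp only [(hsrc j).trans (if_neg (Ne.symm hj)), Matrix.mul_zero]
    rfl
  · rw [transfer, transpose_mul]
    exact congrArg _ ((hsrc _).trans (if_pos rfl))

theorem txPairing_eq_transfer (k l : Fin n) {d : ℕ} (hd : 0 < d) (hdT : d ≤ T) :
    S.txPairing k l d = S.transfer l k := by
  induction d with
  | zero => exact absurd hd (lt_irrefl 0)
  | succ d ih =>
    rw [S.txPairing_succ k l hdT]
    rcases Nat.eq_zero_or_pos d with rfl | hd
    · exact S.rxPairing_zero k l
    · rw [S.rxPairing_eq_txPairing k l hd hdT, ih hd (by omega)]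

theorem transfer_reciprocal (k l : Fin n) : S.reciprocal.transfer k l = (S.transfer l k)ᵀ := by
  rcases Nat.eq_zero_or_pos T with rfl | hT
  · simp only [transfer, yTransfer, Matrix.mul_zero, transpose_zero]
    rfl
  · have h := congrArg transpose (S.txPairing_self k l)
    rw [S.txPairing_eq_transfer k l hT le_rfl] at h
    exact (h.trans (transpose_transpose _)).symm

def ofReciprocal (S' : Scheme N.reciprocal) : Scheme N where
  C k := (S'.D k)ᵀ
  F m j := if h : m ≤ T then (S'.F (T - m) (cast (congrArg N.V (by omega)) j))ᵀ else 0
  D k := (S'.C k)ᵀ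

theorem reciprocal_ofReciprocal_F (S' : Scheme N.reciprocal) {m : ℕ} (hm : m ≤ T) :
    (ofReciprocal S').reciprocal.F m = S'.F m := by
  funext j
  show (dite _ _ _)ᵀ = _
  rw [dif_pos (Nat.sub_le T m), transpose_transpose]
  have hF : ∀ a (h : a = m) (j' : N.reciprocal.V a), HEq j' j → S'.F a j' = S'.F m j := by
    rintro _ rfl _ hj
    rw [eq_of_heq hj]
  exact hF _ (by omega) _ (cast_heq _ _)

theorem transfer_eq_transpose_transfer_ofReciprocal (S' : Scheme N.reciprocal) (k l : Fin n) :
    S'.transfer k l = ((ofReciprocal S').transfer l k)ᵀ := by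
  have hcongr : (ofReciprocal S').reciprocal.transfer = S'.transfer :=
    transfer_congr (funext fun _ => transpose_transpose _) (funext fun _ => transpose_transpose _)
      fun _ hm => reciprocal_ofReciprocal_F S' hm.le
  rw [← hcongr, transfer_reciprocal]

theorem solves_reciprocal_iff {S : Scheme N} {S' : Scheme N.reciprocal}
    (h : ∀ k l, S'.transfer k l = (S.transfer l k)ᵀ) : Solves N.reciprocal S' ↔ Solves N S := by
  rw [solves_iff_transfer, solves_iff_transfer]
  refine and_congr (forall_congr' fun k => ⟨fun hk => ?_, fun hk => ?_⟩)
    ⟨fun hkl k l ne => ?_, fun hkl k l ne => ?_⟩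
  · exact transpose_eq_one.1 ((h k k).symm.trans hk)
  · exact (h k k).trans (transpose_eq_one.2 hk)
  · exact transpose_eq_zero.1 ((h l k).symm.trans (hkl l k ne.symm))
  · exact (h k l).trans (transpose_eq_zero.2 (hkl l k ne.symm))

end Scheme

theorem linearlySolvable_iff_reciprocal_general :
    LinearlySolvable N ↔ LinearlySolvable N.reciprocal := by
  constructor
  · rintro ⟨S, hS⟩
    exact ⟨S.reciprocal, (Scheme.solves_reciprocal_iff S.transfer_reciprocal).2 hS⟩
  · rintro ⟨S', hS'⟩
    exact ⟨Scheme.ofReciprocal S',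
      (Scheme.solves_reciprocal_iff (Scheme.transfer_eq_transpose_transfer_ofReciprocal S')).1 hS'⟩

/-- **Reciprocity of linear solvability.**  A `(T+1)`-layered linear
deterministic network `N` over `𝔽_p` is linearly solvable if and only if its
reciprocal network `N′` is linearly solvable.  (Equivalently, the rate tuple
`(w 1 · log p, …, w n · log p)` is achievable by linear coding on `N` iff it is
achievable by linear coding on `N′`: the message lengths `w` of `N` and of
`N.reciprocal` are the same.) -/
theorem linearlySolvable_iff_reciprocal [Fact p.Prime]
    (hq : 1 ≤ q) (hT : 1 ≤ T) (hn : 1 ≤ n) (hw : ∀ k, 1 ≤ N.w k) :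
    LinearlySolvable N ↔ LinearlySolvable N.reciprocal :=
  linearlySolvable_iff_reciprocal_general
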